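/- Let μ = 1 (cubic NLS), α < 0, N a positive integer, and ω > α²/N². For integers 0 ≤ j < j' ≤ ⌊(N−1)/2⌋ (so that both Ψʲ_ω and Ψ^{j'}_ω exist when additionally ω > α²/(2j'−N)²), the energies are strictly ordered: E[Ψʲ_ω] < E[Ψ^{j'}_ω]. That is, for attractive vertex interaction the energy of the stationary states at fixed ω strictly increases with the number of bumps j. -/

import Mathlib

open MeasureTheory Set

/-- The inverse hyperbolic tangent. -/
noncomputable def arctanh (x : ℝ) : ℝ := (1 / 2) * Real.log ((1 + x) / (1 - x))

/-- The cubic (μ = 1) soliton profile `φ_{ω,a}(x) = √(2ω) sech(√ω (x − a))`. -/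
noncomputable def cubicProfile (ω a : ℝ) (x : ℝ) : ℝ :=
  Real.sqrt (2 * ω) * (1 / Real.cosh (Real.sqrt ω * (x - a)))

/-- The energy `E[Ψʲ_ω]` of the cubic stationary state with `j` bumps and `N − j`
tails on the `N`-edge star graph with delta vertex of strength `α`:
`E[Ψ] = Σᵢ ∫₀^∞ (|ψᵢ'|²/2 − |ψᵢ|⁴/4) dx + (α/2)|ψ₁(0)|²`. -/
noncomputable def cubicStateEnergy (α ω : ℝ) (N j : ℕ) : ℝ :=
  let aj : ℝ := 1 / Real.sqrt ω * arctanh (α / ((2 * (j : ℝ) - N) * Real.sqrt ω))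
  (j : ℝ) * (∫ x in Ioi (0 : ℝ),
      ((deriv (cubicProfile ω aj) x) ^ 2 / 2 - (cubicProfile ω aj x) ^ 4 / 4))
    + ((N : ℝ) - j) * (∫ x in Ioi (0 : ℝ),
      ((deriv (cubicProfile ω (-aj)) x) ^ 2 / 2 - (cubicProfile ω (-aj) x) ^ 4 / 4))
    + α / 2 * (cubicProfile ω aj 0) ^ 2

/-!
With `T = tanh (√ω (x - a))` one has `T' = √ω (1 - T²)` and `φ_{ω,a}² = 2ω (1 - T²)`, so the
energy density on a half-line is `ω² (1 - T²)(2T² - 1)` and integrates to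
`ω^{3/2} (2t³/3 - t - 1/3)` with `t = tanh (√ω a)`. The shift `a_j` makes `t = α / ((2j - N) √ω)`
on the `j` bumps and `-t` on the `N - j` tails; summing with the vertex term
`α ω (1 - t²)` gives `E[Ψʲ_ω] = -(N/3) ω^{3/2} - α³ / (3 (2j - N)²)`. For `α < 0` the last term is
positive and decreases as `(2j - N)²` grows, i.e. as `j` decreases.
-/

open Filter Real Topology

namespace Real

theorem one_sub_tanh_sq (x : ℝ) : 1 - tanh x ^ 2 = 1 / cosh x ^ 2 := by
  have := cosh_sq x
  have := (cosh_pos x).ne'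
  rw [tanh_eq_sinh_div_cosh]
  field_simp
  linarith

theorem hasDerivAt_tanh (x : ℝ) : HasDerivAt tanh (1 - tanh x ^ 2) x := by
  have h := (hasDerivAt_sinh x).div (hasDerivAt_cosh x) (cosh_pos x).ne'
  rw [show sinh / cosh = tanh from funext fun y => (tanh_eq_sinh_div_cosh y).symm] at h
  refine h.congr_deriv ?_
  rw [one_sub_tanh_sq, ← cosh_sq_sub_sinh_sq x]
  ring

theorem tendsto_tanh_atTop : Tendsto tanh atTop (𝓝 1) := by
  have h (x : ℝ) : tanh x = (1 - exp (-2 * x)) / (1 + exp (-2 * x)) := by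
    have hinv : exp x * exp (-x) = 1 := by rw [← exp_add, add_neg_cancel, exp_zero]
    rw [tanh_eq, show -2 * x = -x + -x by ring, exp_add]
    have := exp_pos x
    have := exp_pos (-x)
    field_simp
    linear_combination 2 * exp (-x) * hinv
  have hexp : Tendsto (fun x : ℝ => exp (-2 * x)) atTop (𝓝 0) :=
    tendsto_exp_atBot.comp (tendsto_id.const_mul_atTop_of_neg (by norm_num))
  have := (tendsto_const_nhds (x := (1 : ℝ))).sub hexp |>.div
    ((tendsto_const_nhds (x := (1 : ℝ))).add hexp) (by norm_num)
  rw [sub_zero, add_zero, div_one] at this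
  rwa [funext h]

end Real

theorem arctanh_eq_artanh {x : ℝ} (hx : x ∈ Icc (-1) 1) : arctanh x = artanh x :=
  (artanh_eq_half_log hx).symm

theorem tanh_arctanh {x : ℝ} (hx : x ∈ Ioo (-1) 1) : tanh (arctanh x) = x := by
  rw [arctanh_eq_artanh (Ioo_subset_Icc_self hx), tanh_artanh hx]

theorem integral_Ioi_sub_of_hasDerivAt_of_nonneg {f g f' g' : ℝ → ℝ} {a lf lg : ℝ}
    (hf : ∀ x ∈ Ici a, HasDerivAt f (f' x) x) (hg : ∀ x ∈ Ici a, HasDerivAt g (g' x) x)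
    (hf' : ∀ x ∈ Ioi a, 0 ≤ f' x) (hg' : ∀ x ∈ Ioi a, 0 ≤ g' x)
    (hlf : Tendsto f atTop (𝓝 lf)) (hlg : Tendsto g atTop (𝓝 lg)) :
    ∫ x in Ioi a, (f' x - g' x) = (lf - f a) - (lg - g a) := by
  rw [integral_sub (integrableOn_Ioi_deriv_of_nonneg' hf hf' hlf)
    (integrableOn_Ioi_deriv_of_nonneg' hg hg' hlg),
    integral_Ioi_of_hasDerivAt_of_nonneg' hf hf' hlf,
    integral_Ioi_of_hasDerivAt_of_nonneg' hg hg' hlg]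

section cubicProfile

variable {ω : ℝ} (a x : ℝ)

theorem hasDerivAt_cubicProfile :
    HasDerivAt (cubicProfile ω a) (-(√ω * tanh (√ω * (x - a)) * cubicProfile ω a x)) x := by
  have hu : HasDerivAt (fun x => √ω * (x - a)) √ω x := by
    simpa using ((hasDerivAt_id x).sub_const a).const_mul √ω
  have h := (((hasDerivAt_cosh _).comp x hu).inv (cosh_pos _).ne').const_mul √(2 * ω)
  refine (h.congr_deriv ?_).congr_of_eventuallyEq
    (Eventually.of_forall fun y => by simp [cubicProfile])
  simp only [Function.comp_def, cubicProfile, tanh_eq_sinh_div_cosh]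
  field_simp

theorem cubicProfile_sq (hω : 0 ≤ ω) :
    cubicProfile ω a x ^ 2 = 2 * ω * (1 - tanh (√ω * (x - a)) ^ 2) := by
  rw [cubicProfile, one_sub_tanh_sq, mul_pow, sq_sqrt (by positivity)]
  ring

theorem cubicProfile_energyDensity (hω : 0 ≤ ω) :
    deriv (cubicProfile ω a) x ^ 2 / 2 - cubicProfile ω a x ^ 4 / 4
      = ω ^ 2 * (1 - tanh (√ω * (x - a)) ^ 2) * (2 * tanh (√ω * (x - a)) ^ 2 - 1) := by
  rw [(hasDerivAt_cubicProfile a x).deriv, show (4 : ℕ) = 2 * 2 from rfl, pow_mul,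
    neg_sq, mul_pow, mul_pow, cubicProfile_sq a x hω, sq_sqrt hω]
  ring

theorem integral_Ioi_cubicProfile_energyDensity (hω : 0 < ω) :
    ∫ x in Ioi (0 : ℝ), (deriv (cubicProfile ω a) x ^ 2 / 2 - cubicProfile ω a x ^ 4 / 4)
      = ω * √ω * (2 / 3 * tanh (√ω * a) ^ 3 - tanh (√ω * a) - 1 / 3) := by
  set T : ℝ → ℝ := fun x => tanh (√ω * (x - a)) with hT
  have hs2 : √ω ^ 2 = ω := sq_sqrt hω.le
  have hT' (x : ℝ) : HasDerivAt T (√ω * (1 - T x ^ 2)) x := by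
    have hu : HasDerivAt (fun x => √ω * (x - a)) √ω x := by
      simpa using ((hasDerivAt_id x).sub_const a).const_mul √ω
    exact ((hasDerivAt_tanh _).comp x hu).congr_deriv (mul_comm _ _)
  have hTlim : Tendsto T atTop (𝓝 1) :=
    tendsto_tanh_atTop.comp <| (tendsto_atTop_add_const_right _ (-a) tendsto_id).const_mul_atTop
      (sqrt_pos.2 hω)
  have hT1 (x : ℝ) : 0 ≤ 1 - T x ^ 2 := by simpa using (tanh_sq_lt_one (√ω * (x - a))).le
  -- The density `ω²(1 - T²)(2T² - 1)` has no sign; split it as `ω²T²(1 - T²) - ω²(1 - T²)²`,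
  -- a difference of two nonnegative derivatives, since `T' = √ω (1 - T²)`.
  have key := integral_Ioi_sub_of_hasDerivAt_of_nonneg (a := 0)
    (f := fun x => ω * √ω * (T x ^ 3 / 3)) (g := fun x => ω * √ω * (T x - T x ^ 3 / 3))
    (f' := fun x => ω ^ 2 * (T x ^ 2 * (1 - T x ^ 2))) (g' := fun x => ω ^ 2 * (1 - T x ^ 2) ^ 2)
    (fun x _ => ((((hT' x).pow 3).div_const 3).const_mul (ω * √ω)).congr_deriv
      (by linear_combination ω * T x ^ 2 * (1 - T x ^ 2) * hs2))
    (fun x _ => (((hT' x).sub (((hT' x).pow 3).div_const 3)).const_mul (ω * √ω)).congr_deriv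
      (by linear_combination ω * (1 - T x ^ 2) ^ 2 * hs2))
    (fun x _ => mul_nonneg (sq_nonneg _) (mul_nonneg (sq_nonneg _) (hT1 x)))
    (fun x _ => by positivity)
    (((hTlim.pow 3).div_const 3).const_mul _)
    ((hTlim.sub ((hTlim.pow 3).div_const 3)).const_mul _)
  have hT0 : T 0 = -tanh (√ω * a) := by simp [hT, tanh_neg]
  calc _ = ∫ x in Ioi (0 : ℝ), (ω ^ 2 * (T x ^ 2 * (1 - T x ^ 2)) - ω ^ 2 * (1 - T x ^ 2) ^ 2) :=
        setIntegral_congr_fun measurableSet_Ioi fun x _ => by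
          rw [cubicProfile_energyDensity a x hω.le]; ring
    _ = _ := by rw [key, hT0]; ring

end cubicProfile

theorem cubicStateEnergy_eq {α ω : ℝ} {N j : ℕ} (hm : 2 * (j : ℝ) - N ≠ 0)
    (hω : α ^ 2 / (2 * (j : ℝ) - N) ^ 2 < ω) :
    cubicStateEnergy α ω N j = -(N / 3) * (ω * √ω) - α ^ 3 / (3 * (2 * (j : ℝ) - N) ^ 2) := by
  have hω0 : 0 < ω := (div_nonneg (sq_nonneg α) (sq_nonneg _)).trans_lt hω
  have hs : 0 < √ω := sqrt_pos.2 hω0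
  have hs2 : √ω ^ 2 = ω := sq_sqrt hω0.le
  set m : ℝ := 2 * (j : ℝ) - N with hm_def
  set c : ℝ := α / (m * √ω) with hc
  have hc1 : c ∈ Ioo (-1) 1 := by
    refine abs_lt.1 ((sq_lt_one_iff_abs_lt_one c).1 ?_)
    rw [hc, div_pow, mul_pow, hs2, div_lt_one (by positivity)]
    rwa [div_lt_iff₀ (by positivity), mul_comm] at hω
  have htanh : tanh (√ω * (1 / √ω * arctanh c)) = c := by
    rw [← mul_assoc, mul_one_div_cancel hs.ne', one_mul, tanh_arctanh hc1]
  have hα : α = c * m * √ω := by rw [hc]; field_simp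
  rw [cubicStateEnergy]
  simp only [← hm_def, ← hc]
  rw [integral_Ioi_cubicProfile_energyDensity _ hω0, integral_Ioi_cubicProfile_energyDensity _ hω0,
    cubicProfile_sq _ _ hω0.le, zero_sub, mul_neg, tanh_neg, htanh, hα]
  field_simp
  linear_combination c ^ 3 * m * hs2 - ω * (2 * c ^ 3 - 3 * c) * hm_def

theorem stmt_8_general (α : ℝ) (hα : α < 0) (N : ℕ)
    (ω : ℝ)
    (j j' : ℕ) (hjj' : j < j') (hj' : j' ≤ (N - 1) / 2)
    (hω' : ω > α ^ 2 / (2 * (j' : ℝ) - N) ^ 2) :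
    -- for the attractive vertex the energies at fixed `ω` strictly increase
    -- with the number of bumps
    cubicStateEnergy α ω N j < cubicStateEnergy α ω N j' := by
  have hm' : 2 * (j' : ℝ) - N < 0 := sub_neg.2 (by exact_mod_cast (by omega : 2 * j' < N))
  have hm : 2 * (j : ℝ) - N < 2 * (j' : ℝ) - N := by gcongr
  have hsq : (2 * (j' : ℝ) - N) ^ 2 < (2 * (j : ℝ) - N) ^ 2 := by nlinarith
  have hωj : α ^ 2 / (2 * (j : ℝ) - N) ^ 2 < ω :=
    (div_le_div_of_nonneg_left (sq_nonneg α) (sq_pos_of_neg hm') hsq.le).trans_lt hω'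
  rw [cubicStateEnergy_eq (hm.trans hm').ne hωj, cubicStateEnergy_eq hm'.ne hω']
  have hα3 : 0 < -α ^ 3 := neg_pos.2 (Odd.pow_neg (by decide) hα)
  have key := div_lt_div_of_pos_left hα3 (mul_pos three_pos (sq_pos_of_neg hm'))
    (mul_lt_mul_of_pos_left hsq three_pos)
  rw [neg_div, neg_div] at key
  linarith

theorem stmt_8 (α : ℝ) (hα : α < 0) (N : ℕ) (hN : 0 < N)
    (ω : ℝ) (hω : ω > α ^ 2 / (N : ℝ) ^ 2)
    (j j' : ℕ) (hjj' : j < j') (hj' : j' ≤ (N - 1) / 2)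
    (hω' : ω > α ^ 2 / (2 * (j' : ℝ) - N) ^ 2) :
    -- for the attractive vertex the energies at fixed `ω` strictly increase
    -- with the number of bumps
    cubicStateEnergy α ω N j < cubicStateEnergy α ω N j' :=
  stmt_8_general α hα N ω j j' hjj' hj' hω'
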